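/- arXiv:2407.05196 — 3 statements merged into one kernel-verified Lean document; each statement's English description precedes it below -/
import Mathlib

section
/- Let $X$ be a sublattice of $\mathbb{R}_+ \times \mathbb{R}$ and $f : X \to \mathbb{R}$ be submodular and nonincreasing in its second coordinate. Then $g : X \to \mathbb{R}$ defined by $g(x, y) = x \cdot f(x, y)$ is submodular. -/
/-- if `X` is a sublattice of `ℝ₊ × ℝ` and `f : X → ℝ` is submodular and
nonincreasing in its second coordinate, then `g(x,y) = x ⬝ f(x,y)` is submodular. -/
theorem stmt6 (X : Set (ℝ × ℝ)) (hXpos : ∀ p ∈ X, 0 ≤ p.1)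
    (hXlat : ∀ p ∈ X, ∀ q ∈ X, p ⊓ q ∈ X ∧ p ⊔ q ∈ X)
    (f : ℝ × ℝ → ℝ)
    (hsub : ∀ p ∈ X, ∀ q ∈ X, f (p ⊓ q) + f (p ⊔ q) ≤ f p + f q)
    (hanti : ∀ p ∈ X, ∀ q ∈ X, p.1 = q.1 → p.2 ≤ q.2 → f q ≤ f p) :
    ∀ p ∈ X, ∀ q ∈ X,
      (p ⊓ q).1 * f (p ⊓ q) + (p ⊔ q).1 * f (p ⊔ q) ≤ p.1 * f p + q.1 * f q := by
  intro p hp q hq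
  obtain ⟨hmmem, hsmem⟩ := hXlat p hp q hq
  have hsub' := hsub p hp q hq
  have hpp := hXpos p hp
  have hqq := hXpos q hq
  rcases le_total p.1 q.1 with h1 | h1 <;> rcases le_total p.2 q.2 with h2 | h2
  · have hle : p ≤ q := Prod.le_def.mpr ⟨h1, h2⟩
    rw [inf_eq_left.mpr hle, sup_eq_right.mpr hle]
  · -- mixed case: inf = (p.1, q.2), sup = (q.1, p.2)
    have hm : p ⊓ q = (p.1, q.2) := Prod.ext (min_eq_left h1) (min_eq_right h2)
    have hs : p ⊔ q = (q.1, p.2) := Prod.ext (max_eq_right h1) (max_eq_left h2)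
    have ha : f p ≤ f (p ⊓ q) := by
      apply hanti _ hmmem _ hp
      · rw [hm]
      · rw [hm]; exact h2
    have hb : f (p ⊔ q) ≤ f q := by
      apply hanti _ hq _ hsmem
      · rw [hs]
      · rw [hs]; exact h2
    rw [hm, hs]
    rw [hm, hs] at hsub'; rw [hm] at ha; rw [hs] at hb
    simp only at *
    nlinarith [mul_le_mul_of_nonneg_left hsub' hpp,
      mul_le_mul_of_nonneg_right h1 (sub_nonneg.mpr hb)]
  · -- mixed case: inf = (q.1, p.2), sup = (p.1, q.2)
    have hm : p ⊓ q = (q.1, p.2) := Prod.ext (min_eq_right h1) (min_eq_left h2)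
    have hs : p ⊔ q = (p.1, q.2) := Prod.ext (max_eq_left h1) (max_eq_right h2)
    have ha : f q ≤ f (p ⊓ q) := by
      apply hanti _ hmmem _ hq
      · rw [hm]
      · rw [hm]; exact h2
    have hb : f (p ⊔ q) ≤ f p := by
      apply hanti _ hp _ hsmem
      · rw [hs]
      · rw [hs]; exact h2
    rw [hm, hs]
    rw [hm, hs] at hsub'; rw [hm] at ha; rw [hs] at hb
    simp only at *
    nlinarith [mul_le_mul_of_nonneg_left hsub' hqq,
      mul_le_mul_of_nonneg_right h1 (sub_nonneg.mpr hb)]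
  · have hle : q ≤ p := Prod.le_def.mpr ⟨h1, h2⟩
    rw [inf_eq_right.mpr hle, sup_eq_left.mpr hle]
    linarith
end

section
/- Let $X$ be a sublattice of $\mathbb{R}_+ \times \mathbb{R}$ and $f : X \to \mathbb{R}$ be supermodular and nondecreasing in its second coordinate. Then $g(x,y) = x \cdot f(x,y)$ is supermodular. -/
lemma stmt7aux (X : Set (ℝ × ℝ)) (hXpos : ∀ p ∈ X, 0 ≤ p.1)
    (hXlat : ∀ p ∈ X, ∀ q ∈ X, p ⊓ q ∈ X ∧ p ⊔ q ∈ X)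
    (f : ℝ × ℝ → ℝ)
    (hsup : ∀ p ∈ X, ∀ q ∈ X, f p + f q ≤ f (p ⊓ q) + f (p ⊔ q))
    (hmono : ∀ p ∈ X, ∀ q ∈ X, p.1 = q.1 → p.2 ≤ q.2 → f p ≤ f q)
    (p : ℝ × ℝ) (hp : p ∈ X) (q : ℝ × ℝ) (hq : q ∈ X) (h1 : p.1 ≤ q.1) :
    p.1 * f p + q.1 * f q ≤ (p ⊓ q).1 * f (p ⊓ q) + (p ⊔ q).1 * f (p ⊔ q) := by
  rcases le_total p.2 q.2 with h2 | h2
  · have hle : p ≤ q := Prod.le_def.mpr ⟨h1, h2⟩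
    rw [inf_eq_left.mpr hle, sup_eq_right.mpr hle]
  · obtain ⟨hr, hs⟩ := hXlat p hp q hq
    have hrf : (p ⊓ q).1 = p.1 := min_eq_left h1
    have hsf : (p ⊔ q).1 = q.1 := max_eq_right h1
    have hss : (p ⊔ q).2 = p.2 := max_eq_left h2
    have hqs : f q ≤ f (p ⊔ q) := hmono q hq _ hs hsf.symm (by rw [hss]; exact h2)
    have hsm := hsup p hp q hq
    have ha : 0 ≤ p.1 := hXpos p hp
    rw [hrf, hsf]
    nlinarith [mul_le_mul_of_nonneg_left (show f p - f (p ⊓ q) ≤ f (p ⊔ q) - f q by linarith) ha,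
      mul_le_mul_of_nonneg_right h1 (show (0:ℝ) ≤ f (p ⊔ q) - f q by linarith)]

/-- if `X` is a sublattice of `ℝ₊ × ℝ` and `f : X → ℝ` is supermodular and
nondecreasing in its second coordinate, then `g(x,y) = x ⬝ f(x,y)` is supermodular. -/
theorem stmt7 (X : Set (ℝ × ℝ)) (hXpos : ∀ p ∈ X, 0 ≤ p.1)
    (hXlat : ∀ p ∈ X, ∀ q ∈ X, p ⊓ q ∈ X ∧ p ⊔ q ∈ X)
    (f : ℝ × ℝ → ℝ)
    (hsup : ∀ p ∈ X, ∀ q ∈ X, f p + f q ≤ f (p ⊓ q) + f (p ⊔ q))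
    (hmono : ∀ p ∈ X, ∀ q ∈ X, p.1 = q.1 → p.2 ≤ q.2 → f p ≤ f q) :
    ∀ p ∈ X, ∀ q ∈ X,
      p.1 * f p + q.1 * f q ≤ (p ⊓ q).1 * f (p ⊓ q) + (p ⊔ q).1 * f (p ⊔ q) := by
  intro p hp q hq
  rcases le_total p.1 q.1 with h | h
  · exact stmt7aux X hXpos hXlat f hsup hmono p hp q hq h
  · have := stmt7aux X hXpos hXlat f hsup hmono q hq p hp h
    rw [inf_comm, sup_comm]
    linarith
end

section
/- Let $\nu : \mathbb{R}_- \to \mathbb{R}_+$ be increasing with $\nu(\theta) = u(\theta)/(-\theta)$, where $u : \mathbb{R}_- \to \mathbb{R}_{>0}$ satisfies $0 < \liminf_{\theta \to 0^-} u(\theta) \leq \limsup_{\theta \to 0^-} u(\theta) < \infty$. Let $c(\theta) = -\theta$ have distribution (under a probability measure $\lambda$ on $\mathbb{R}_-$) with $f = \lim_{\varepsilon \to 0} \Pr_\lambda(c < \varepsilon)/\varepsilon$ existing in $[0,\infty]$. Then $u_-(0) \cdot f \leq \liminf_{v \to \infty} v \Pr_\lambda(\nu > v) \leq \limsup_{v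 \to \infty} v \Pr_\lambda(\nu > v) \leq u_+(0) \cdot f$, where $u_-(0) = \liminf_{\theta \to 0^-} u(\theta)$ and $u_+(0) = \limsup_{\theta \to 0^-} u(\theta)$. -/
open MeasureTheory Filter Set Topology
open scoped ENNReal

/-!
Writing `ν θ = u θ / (-θ)`, the tail event `{v < ν}` is `{-θ < u θ / v}`. If `u < c` (resp. `c < u`)
on `(a, 0)`, then for large `v` the tail event is contained in (resp. contains, up to the null set
`{0 ≤ θ}`) the cost event `{-θ < c / v}`: monotonicity of `ν` keeps the tail event inside `(a, 0)`,
and `c / v ≤ -a` keeps the cost event there. With `ε = c / v → 0⁺`,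
`v μ{-θ < c / v} = c · μ{-θ < ε} / ε → c f`, and letting `c → u₊(0)` (resp. `c → u₋(0)`) concludes.
-/

lemma lt_div_neg_iff_neg_lt_div {θ v w : ℝ} (hθ : θ < 0) (hv : 0 < v) :
    v < w / -θ ↔ -θ < w / v := by
  rw [lt_div_iff₀ (neg_pos.2 hθ), lt_div_iff₀' hv]

lemma ENNReal.ofReal_mul_eq_ofReal_mul_div_ofReal_div {c v : ℝ} (hc : 0 < c) (hv : 0 < v)
    (x : ℝ≥0∞) : ENNReal.ofReal v * x = ENNReal.ofReal c * (x / ENNReal.ofReal (c / v)) := by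
  rw [ENNReal.ofReal_div_of_pos hv]
  nth_rw 1 [← ENNReal.div_div_cancel (ENNReal.ofReal_pos.2 hc).ne' ENNReal.ofReal_ne_top
    (b := ENNReal.ofReal v)]
  simp only [div_eq_mul_inv]
  ring

lemma tendsto_ofReal_mul_measure_neg_lt_div {μ : Measure ℝ} {f : ℝ≥0∞}
    (hf : Tendsto (fun ε : ℝ => μ {θ | -θ < ε} / ENNReal.ofReal ε) (𝓝[>] 0) (𝓝 f))
    {c : ℝ} (hc : 0 < c) :
    Tendsto (fun v : ℝ => ENNReal.ofReal v * μ {θ | -θ < c / v}) atTop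
      (𝓝 (ENNReal.ofReal c * f)) := by
  have hε : Tendsto (fun v : ℝ => c / v) atTop (𝓝[>] 0) :=
    tendsto_nhdsWithin_of_tendsto_nhds_of_eventually_within _ (tendsto_id.const_div_atTop c)
      (by filter_upwards [eventually_gt_atTop 0] with v hv using div_pos hc hv)
  refine (ENNReal.Tendsto.const_mul (hf.comp hε) (Or.inr ENNReal.ofReal_ne_top)).congr' ?_
  filter_upwards [eventually_gt_atTop 0] with v hv
  exact (ENNReal.ofReal_mul_eq_ofReal_mul_div_ofReal_div hc hv _).symm

section Tail

variable {u ν : ℝ → ℝ} (hν : ∀ θ < 0, ν θ = u θ / (-θ))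
include hν

lemma setOf_lt_nu_subset {a c v : ℝ} (hmono : MonotoneOn ν (Iio 0)) (ha : a < 0) (hv : 0 < v)
    (hva : ν a ≤ v) (hu : ∀ θ ∈ Ioo a 0, u θ < c) :
    {θ | θ < 0 ∧ v < ν θ} ⊆ {θ | -θ < c / v} := by
  rintro θ ⟨hθ, hθv⟩
  have haθ : a < θ := lt_of_not_ge fun hθa => hθv.not_ge ((hmono hθ ha hθa).trans hva)
  rw [hν θ hθ, lt_div_neg_iff_neg_lt_div hθ hv] at hθv
  exact hθv.trans (div_lt_div_of_pos_right (hu θ ⟨haθ, hθ⟩) hv)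

lemma setOf_neg_lt_div_subset {a c v : ℝ} (hv : 0 < v) (hcv : c / v ≤ -a)
    (hu : ∀ θ ∈ Ioo a 0, c < u θ) :
    {θ | -θ < c / v} ⊆ {θ | θ < 0 ∧ v < ν θ} ∪ {θ | 0 ≤ θ} := by
  intro θ hθc
  rcases le_or_gt 0 θ with hθ | hθ
  · exact Or.inr hθ
  have haθ : a < θ := by linarith [show -θ < c / v from hθc]
  refine Or.inl ⟨hθ, ?_⟩
  rw [hν θ hθ, lt_div_neg_iff_neg_lt_div hθ hv]
  exact lt_trans hθc (div_lt_div_of_pos_right (hu θ ⟨haθ, hθ⟩) hv)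

variable {μ : Measure ℝ} {f : ℝ≥0∞}
    (hf : Tendsto (fun ε : ℝ => μ {θ | -θ < ε} / ENNReal.ofReal ε) (𝓝[>] 0) (𝓝 f))
include hf

lemma limsup_ofReal_mul_measure_lt_nu_le (hmono : MonotoneOn ν (Iio 0)) {c : ℝ} (hc : 0 < c)
    (hu : ∀ᶠ θ in 𝓝[<] 0, u θ < c) :
    limsup (fun v : ℝ => ENNReal.ofReal v * μ {θ | θ < 0 ∧ v < ν θ}) atTop ≤
      ENNReal.ofReal c * f := by
  obtain ⟨a, ha, hau⟩ := mem_nhdsLT_iff_exists_Ioo_subset.1 hu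
  refine (limsup_le_limsup ?_).trans_eq (tendsto_ofReal_mul_measure_neg_lt_div hf hc).limsup_eq
  filter_upwards [eventually_gt_atTop 0, eventually_ge_atTop (ν a)] with v hv hva
  exact mul_le_mul_right (measure_mono (setOf_lt_nu_subset hν hmono ha hv hva hau)) _

lemma ofReal_mul_le_liminf_ofReal_mul_measure_lt_nu (hsupp : μ {θ | 0 ≤ θ} = 0) {c : ℝ}
    (hc : 0 < c) (hu : ∀ᶠ θ in 𝓝[<] 0, c < u θ) :
    ENNReal.ofReal c * f ≤
      liminf (fun v : ℝ => ENNReal.ofReal v * μ {θ | θ < 0 ∧ v < ν θ}) atTop := by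
  obtain ⟨a, ha, hau⟩ := mem_nhdsLT_iff_exists_Ioo_subset.1 hu
  refine (tendsto_ofReal_mul_measure_neg_lt_div hf hc).liminf_eq.symm.trans_le
    (liminf_le_liminf ?_)
  filter_upwards [eventually_gt_atTop 0,
    (tendsto_id.const_div_atTop c).eventually (ge_mem_nhds (neg_pos.2 ha))] with v hv hcv
  refine mul_le_mul_right ?_ _
  calc μ {θ | -θ < c / v} ≤ μ ({θ | θ < 0 ∧ v < ν θ} ∪ {θ | 0 ≤ θ}) :=
        measure_mono (setOf_neg_lt_div_subset hν hv hcv hau)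
    _ ≤ μ {θ | θ < 0 ∧ v < ν θ} + μ {θ | 0 ≤ θ} := measure_union_le _ _
    _ = μ {θ | θ < 0 ∧ v < ν θ} := by rw [hsupp, add_zero]

end Tail

lemma ENNReal.le_ofReal_mul_of_forall_lt {x f : ℝ≥0∞} {a : ℝ} (ha : 0 < a)
    (h : ∀ c, a < c → x ≤ ENNReal.ofReal c * f) : x ≤ ENNReal.ofReal a * f := by
  have hlim : Tendsto (fun c => ENNReal.ofReal c * f) (𝓝[>] a) (𝓝 (ENNReal.ofReal a * f)) :=
    ENNReal.Tendsto.mul_const ENNReal.continuous_ofReal.continuousWithinAt.tendsto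
      (Or.inl (ENNReal.ofReal_pos.2 ha).ne')
  exact ge_of_tendsto hlim (eventually_nhdsWithin_of_forall h)

lemma ENNReal.ofReal_mul_le_of_forall_lt {x f : ℝ≥0∞} {a : ℝ} (ha : 0 < a)
    (h : ∀ c, 0 < c → c < a → ENNReal.ofReal c * f ≤ x) : ENNReal.ofReal a * f ≤ x := by
  have hlim : Tendsto (fun c => ENNReal.ofReal c * f) (𝓝[<] a) (𝓝 (ENNReal.ofReal a * f)) :=
    ENNReal.Tendsto.mul_const ENNReal.continuous_ofReal.continuousWithinAt.tendsto
      (Or.inl (ENNReal.ofReal_pos.2 ha).ne')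
  exact le_of_tendsto hlim (mem_of_superset (Ioo_mem_nhdsLT ha) fun c hc => h c hc.1 hc.2)

theorem stmt13_general (μ : Measure ℝ) (hsupp : μ {θ | 0 ≤ θ} = 0)
    (u : ℝ → ℝ)
    (ν : ℝ → ℝ) (hν : ∀ θ < 0, ν θ = u θ / (-θ)) (hmono : MonotoneOn ν (Iio 0))
    (uminus uplus : ℝ)
    (hbdd : ∃ M : ℝ, ∀ᶠ θ in nhdsWithin 0 (Iio 0), |u θ| ≤ M)
    (hliminf : uminus = Filter.liminf u (nhdsWithin 0 (Iio 0)))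
    (hlimsup : uplus = Filter.limsup u (nhdsWithin 0 (Iio 0)))
    (hpos : 0 < uminus)
    (f : ℝ≥0∞)
    (hf : Tendsto (fun ε : ℝ => μ {θ | -θ < ε} / ENNReal.ofReal ε)
      (nhdsWithin 0 (Ioi 0)) (nhds f)) :
    ENNReal.ofReal uminus * f ≤
        Filter.liminf (fun v : ℝ => ENNReal.ofReal v * μ {θ | θ < 0 ∧ v < ν θ}) atTop ∧
      Filter.limsup (fun v : ℝ => ENNReal.ofReal v * μ {θ | θ < 0 ∧ v < ν θ}) atTop ≤
        ENNReal.ofReal uplus * f := by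
  obtain ⟨M, hM⟩ := hbdd
  obtain ⟨hbdd_le, hbdd_ge⟩ := isBoundedUnder_le_abs.1 ⟨M, eventually_map.2 hM⟩
  have hle : uminus ≤ uplus := hliminf ▸ hlimsup ▸ liminf_le_limsup hbdd_le hbdd_ge
  refine ⟨ENNReal.ofReal_mul_le_of_forall_lt hpos fun c hc hcu => ?_,
    ENNReal.le_ofReal_mul_of_forall_lt (hpos.trans_le hle) fun c hc => ?_⟩
  · exact ofReal_mul_le_liminf_ofReal_mul_measure_lt_nu hν hf hsupp hc
      (eventually_lt_of_lt_liminf (hliminf ▸ hcu) hbdd_ge)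
  · exact limsup_ofReal_mul_measure_lt_nu_le hν hf hmono (by linarith)
      (eventually_lt_of_limsup_lt (hlimsup ▸ hc) hbdd_le)

/-- with ordered types, `ν(θ) = u(θ)/(-θ)` increasing on `ℝ₋`, `u` bounded
above and away from `0` near `0⁻`, and `f = lim_{ε→0} Pr(c < ε)/ε ∈ [0,∞]` (here
`c(θ) = -θ`), the tail of `ν` satisfies
`u₋(0) f ≤ liminf_{v→∞} v Pr(ν > v) ≤ limsup_{v→∞} v Pr(ν > v) ≤ u₊(0) f`. -/
theorem stmt13 (μ : Measure ℝ) [IsProbabilityMeasure μ] (hsupp : μ {θ | 0 ≤ θ} = 0)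
    (u : ℝ → ℝ) (hu : ∀ θ < 0, 0 < u θ)
    (ν : ℝ → ℝ) (hν : ∀ θ < 0, ν θ = u θ / (-θ)) (hmono : MonotoneOn ν (Iio 0))
    (uminus uplus : ℝ)
    (hbdd : ∃ M : ℝ, ∀ᶠ θ in nhdsWithin 0 (Iio 0), |u θ| ≤ M)
    (hliminf : uminus = Filter.liminf u (nhdsWithin 0 (Iio 0)))
    (hlimsup : uplus = Filter.limsup u (nhdsWithin 0 (Iio 0)))
    (hpos : 0 < uminus)
    (f : ℝ≥0∞)
    (hf : Tendsto (fun ε : ℝ => μ {θ | -θ < ε} / ENNReal.ofReal ε)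
      (nhdsWithin 0 (Ioi 0)) (nhds f)) :
    ENNReal.ofReal uminus * f ≤
        Filter.liminf (fun v : ℝ => ENNReal.ofReal v * μ {θ | θ < 0 ∧ v < ν θ}) atTop ∧
      Filter.limsup (fun v : ℝ => ENNReal.ofReal v * μ {θ | θ < 0 ∧ v < ν θ}) atTop ≤
        ENNReal.ofReal uplus * f :=
  stmt13_general μ hsupp u ν hν hmono uminus uplus hbdd hliminf hlimsup hpos f hf
end
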